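/- Fix reals b, σ with σ ≠ 0, d > 0 and T ≥ 2d. There exists a constant m > 0, depending only on b and σ, such that for every τ ∈ (0, d] and all triples ξ, ξ' in the ball B_τ, one has ‖φ(ξ) − φ(ξ')‖ ≤ τ·m·‖ξ − ξ'‖, where ‖·‖ denotes the sum of the sup norms of the three components. -/

import Mathlib

open Set MeasureTheory

/-- First component of the fixed-point operator `φ`. -/
noncomputable def phi1 (σ T d : ℝ) (ξ₂ : ℝ → ℝ → ℝ) (t : ℝ) : ℝ :=
  1 - (σ ^ 2)⁻¹ * ∫ x in t..(T - d), (ξ₂ x 0) ^ 2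

/-- Second component of the fixed-point operator `φ`. -/
noncomputable def phi2 (b σ T d : ℝ) (ξ₂ : ℝ → ℝ → ℝ) (ξ₃ : ℝ → ℝ → ℝ → ℝ) (t s : ℝ) : ℝ :=
  b * phi1 σ T d ξ₂ (min (T - d) (t + s + d)) -
    (σ ^ 2)⁻¹ * ∫ x in t..(min (T - d) (t + s + d)), ξ₂ x 0 * ξ₃ x (t + s - x) 0

/-- Third component of the fixed-point operator `φ`. -/
noncomputable def phi3 (b σ T d : ℝ) (ξ₂ : ℝ → ℝ → ℝ) (ξ₃ : ℝ → ℝ → ℝ → ℝ) (t s r : ℝ) : ℝ :=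
  b * phi2 b σ T d ξ₂ ξ₃ (min (T - d) (t + min s r + d)) (|s - r| - d) -
    (σ ^ 2)⁻¹ * ∫ x in t..(min (T - d) (t + min s r + d)),
      ξ₃ x (t + s - x) 0 * ξ₃ x 0 (t + r - x)

/-- Membership in the ball `B_τ`. -/
def memBall (b T d τ : ℝ) (ξ₁ : ℝ → ℝ) (ξ₂ : ℝ → ℝ → ℝ) (ξ₃ : ℝ → ℝ → ℝ → ℝ) : Prop :=
  ContinuousOn ξ₁ (Icc (T - d - τ) (T - d)) ∧
  ContinuousOn (fun p : ℝ × ℝ => ξ₂ p.1 p.2) (Icc (T - d - τ) (T - d) ×ˢ Icc (-d) 0) ∧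
  ContinuousOn (fun p : ℝ × ℝ × ℝ => ξ₃ p.1 p.2.1 p.2.2)
    (Icc (T - d - τ) (T - d) ×ˢ Icc (-d) 0 ×ˢ Icc (-d) 0) ∧
  (∀ t ∈ Icc (T - d - τ) (T - d), |ξ₁ t - 1| ≤ 1 / 2) ∧
  (∀ t ∈ Icc (T - d - τ) (T - d), ∀ s ∈ Icc (-d) 0, |ξ₂ t s - b| ≤ |b| / 2) ∧
  (∀ t ∈ Icc (T - d - τ) (T - d), ∀ s ∈ Icc (-d) 0, ∀ r ∈ Icc (-d) 0,
    |ξ₃ t s r - b ^ 2| ≤ b ^ 2 / 2)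

/-- Sup norm of a one-variable function on `[T-d-τ, T-d]`. -/
noncomputable def supNorm1 (T d τ : ℝ) (f : ℝ → ℝ) : ℝ :=
  sSup ((fun t => |f t|) '' Icc (T - d - τ) (T - d))

/-- Sup norm of a two-variable function on `[T-d-τ, T-d] × [-d,0]`. -/
noncomputable def supNorm2 (T d τ : ℝ) (f : ℝ → ℝ → ℝ) : ℝ :=
  sSup ((fun p : ℝ × ℝ => |f p.1 p.2|) '' (Icc (T - d - τ) (T - d) ×ˢ Icc (-d) 0))

/-- Sup norm of a three-variable function on `[T-d-τ, T-d] × [-d,0]²`. -/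
noncomputable def supNorm3 (T d τ : ℝ) (f : ℝ → ℝ → ℝ → ℝ) : ℝ :=
  sSup ((fun p : ℝ × ℝ × ℝ => |f p.1 p.2.1 p.2.2|) ''
    (Icc (T - d - τ) (T - d) ×ˢ Icc (-d) 0 ×ˢ Icc (-d) 0))

/-!
Each component of `φ` is `b` times the previous component, evaluated at a shifted point, minus
`σ⁻²` times the integral of a product of components of `ξ` over a window of length at most `τ`.
On the ball the components of `ξ` are bounded by `(3/2)(1 + |b|)²`, so the integrands of `φ(ξ)`
and `φ(ξ')` differ by at most `3(1 + |b|)²‖ξ - ξ'‖`, and each integral by `τ` times that. Each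
stage of the recursion `φ₁ → φ₂ → φ₃` adds `|b|` times the previous bound, which gives the
bounds `3(1 + |b|)`, `6(1 + |b|)²`, `9(1 + |b|)³` in units of `σ⁻² τ ‖ξ - ξ'‖`, hence
`m = 18(1 + |b|)³ / σ²`.
-/

lemma abs_mul_sub_mul_le {a a' c c' M ε : ℝ} (ha' : |a'| ≤ M) (hc : |c| ≤ M)
    (ha : |a - a'| ≤ ε) (hc' : |c - c'| ≤ ε) : |a * c - a' * c'| ≤ 2 * M * ε := by
  have hε : 0 ≤ ε := (abs_nonneg _).trans ha
  calc |a * c - a' * c'| = |(a - a') * c + a' * (c - c')| := by ring_nf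
    _ ≤ |a - a'| * |c| + |a'| * |c - c'| := by
        rw [← abs_mul, ← abs_mul]; exact abs_add_le _ _
    _ ≤ ε * M + M * ε := by
        have hM : 0 ≤ M := (abs_nonneg _).trans ha'
        gcongr
    _ = 2 * M * ε := by ring

lemma abs_intervalIntegral_sub_le_mul {f g : ℝ → ℝ} {t u C τ : ℝ} (htu : t ≤ u)
    (hlen : u - t ≤ τ) (hf : ContinuousOn f (Icc t u)) (hg : ContinuousOn g (Icc t u))
    (hfg : ∀ x ∈ Icc t u, |f x - g x| ≤ C) :
    |(∫ x in t..u, f x) - ∫ x in t..u, g x| ≤ C * τ := by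
  have hC : 0 ≤ C := (abs_nonneg _).trans (hfg t ⟨le_rfl, htu⟩)
  rw [← intervalIntegral.integral_sub (hf.intervalIntegrable_of_Icc htu)
    (hg.intervalIntegrable_of_Icc htu)]
  have := intervalIntegral.norm_integral_le_of_norm_le_const fun x hx =>
    (Real.norm_eq_abs (f x - g x)).trans_le
      (hfg x (Ioc_subset_Icc_self (by rwa [uIoc_of_le htu] at hx)))
  rw [Real.norm_eq_abs, abs_of_nonneg (sub_nonneg.2 htu)] at this
  exact this.trans (by gcongr)

lemma le_sSup_abs_image {α : Type*} [TopologicalSpace α] {S : Set α} {f : α → ℝ}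
    (hS : IsCompact S) (hf : ContinuousOn f S) {p : α} (hp : p ∈ S) :
    |f p| ≤ sSup ((fun p => |f p|) '' S) :=
  le_csSup (hS.bddAbove_image hf.abs) (mem_image_of_mem _ hp)

lemma sSup_abs_image_le {α : Type*} {S : Set α} {f : α → ℝ} {C : ℝ} (hS : S.Nonempty)
    (h : ∀ p ∈ S, |f p| ≤ C) : sSup ((fun p => |f p|) '' S) ≤ C :=
  csSup_le (hS.image _) (forall_mem_image.2 h)

lemma sSup_abs_image_nonneg {α : Type*} (S : Set α) (f : α → ℝ) :
    0 ≤ sSup ((fun p => |f p|) '' S) :=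
  Real.sSup_nonneg (forall_mem_image.2 fun _ _ => abs_nonneg _)

lemma abs_mul_sub_mul_sub_le (b K x x' A A' : ℝ) (hK : 0 ≤ K) :
    |(b * x - K * A) - (b * x' - K * A')| ≤ |b| * |x - x'| + K * |A - A'| := by
  calc |(b * x - K * A) - (b * x' - K * A')| = |b * (x - x') - K * (A - A')| := by ring_nf
    _ ≤ |b * (x - x')| + |K * (A - A')| := abs_sub _ _
    _ = |b| * |x - x'| + K * |A - A'| := by rw [abs_mul, abs_mul, abs_of_nonneg hK]

section Lipschitz

variable {b σ T d τ ε : ℝ} {ξ₁ ξ₁' : ℝ → ℝ} {ξ₂ ξ₂' : ℝ → ℝ → ℝ} {ξ₃ ξ₃' : ℝ → ℝ → ℝ → ℝ}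

namespace memBall

lemma abs_two_le (h : memBall b T d τ ξ₁ ξ₂ ξ₃) {t s : ℝ} (ht : t ∈ Icc (T - d - τ) (T - d))
    (hs : s ∈ Icc (-d) 0) : |ξ₂ t s| ≤ 3 / 2 * (1 + |b|) := by
  linarith [abs_sub_abs_le_abs_sub (ξ₂ t s) b, h.2.2.2.2.1 t ht s hs]

lemma abs_three_le (h : memBall b T d τ ξ₁ ξ₂ ξ₃) {t s r : ℝ}
    (ht : t ∈ Icc (T - d - τ) (T - d)) (hs : s ∈ Icc (-d) 0) (hr : r ∈ Icc (-d) 0) :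
    |ξ₃ t s r| ≤ 3 / 2 * (1 + |b|) ^ 2 := by
  have h₃ := h.2.2.2.2.2 t ht s hs r hr
  have := abs_sub_abs_le_abs_sub (ξ₃ t s r) (b ^ 2)
  rw [abs_of_nonneg (sq_nonneg b)] at this
  nlinarith [sq_abs b, abs_nonneg b]

lemma continuousOn_two_zero (h : memBall b T d τ ξ₁ ξ₂ ξ₃) (hd : 0 ≤ d) :
    ContinuousOn (fun x => ξ₂ x 0) (Icc (T - d - τ) (T - d)) :=
  h.2.1.comp (f := fun x => (x, 0)) (by fun_prop) fun _ hx => ⟨hx, neg_nonpos.2 hd, le_rfl⟩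

lemma continuousOn_three_comp (h : memBall b T d τ ξ₁ ξ₂ ξ₃) {S : Set ℝ} (g₂ g₃ : ℝ → ℝ)
    (hg₂ : Continuous g₂) (hg₃ : Continuous g₃)
    (hS : ∀ x ∈ S, x ∈ Icc (T - d - τ) (T - d) ∧ g₂ x ∈ Icc (-d) 0 ∧ g₃ x ∈ Icc (-d) 0) :
    ContinuousOn (fun x => ξ₃ x (g₂ x) (g₃ x)) S :=
  h.2.2.1.comp (f := fun x => (x, g₂ x, g₃ x)) (by fun_prop) fun x hx => hS x hx

end memBall

lemma abs_phi1_sub_le (hd : 0 ≤ d) (hB : memBall b T d τ ξ₁ ξ₂ ξ₃)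
    (hB' : memBall b T d τ ξ₁' ξ₂' ξ₃')
    (hε : ∀ t ∈ Icc (T - d - τ) (T - d), ∀ s ∈ Icc (-d) 0, |ξ₂ t s - ξ₂' t s| ≤ ε)
    {t : ℝ} (ht : t ∈ Icc (T - d - τ) (T - d)) :
    |phi1 σ T d ξ₂ t - phi1 σ T d ξ₂' t| ≤ 3 * (1 + |b|) * ((σ ^ 2)⁻¹ * ε * τ) := by
  have h0 : (0 : ℝ) ∈ Icc (-d) 0 := ⟨neg_nonpos.2 hd, le_rfl⟩
  have hsub : Icc t (T - d) ⊆ Icc (T - d - τ) (T - d) := Icc_subset_Icc_left ht.1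
  have hint : |(∫ x in t..(T - d), ξ₂ x 0 ^ 2) - ∫ x in t..(T - d), ξ₂' x 0 ^ 2| ≤
      3 * (1 + |b|) * ε * τ :=
    abs_intervalIntegral_sub_le_mul ht.2 (by linarith [ht.1])
      (((hB.continuousOn_two_zero hd).mono hsub).pow 2)
      (((hB'.continuousOn_two_zero hd).mono hsub).pow 2) fun x hx => by
        have hx' := hsub hx
        rw [sq, sq]
        exact (abs_mul_sub_mul_le (hB'.abs_two_le hx' h0) (hB.abs_two_le hx' h0)
          (hε x hx' 0 h0) (hε x hx' 0 h0)).trans_eq (by ring)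
  have hK : 0 ≤ (σ ^ 2)⁻¹ := by positivity
  have e : phi1 σ T d ξ₂ t - phi1 σ T d ξ₂' t = (σ ^ 2)⁻¹ *
      ((∫ x in t..(T - d), ξ₂' x 0 ^ 2) - ∫ x in t..(T - d), ξ₂ x 0 ^ 2) := by
    unfold phi1; ring
  rw [e, abs_mul, abs_of_nonneg hK, abs_sub_comm]
  calc _ ≤ (σ ^ 2)⁻¹ * (3 * (1 + |b|) * ε * τ) := by gcongr
    _ = _ := by ring

lemma abs_phi2_sub_le (hd : 0 ≤ d) (hB : memBall b T d τ ξ₁ ξ₂ ξ₃)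
    (hB' : memBall b T d τ ξ₁' ξ₂' ξ₃')
    (hε₂ : ∀ t ∈ Icc (T - d - τ) (T - d), ∀ s ∈ Icc (-d) 0, |ξ₂ t s - ξ₂' t s| ≤ ε)
    (hε₃ : ∀ t ∈ Icc (T - d - τ) (T - d), ∀ s ∈ Icc (-d) 0, ∀ r ∈ Icc (-d) 0,
      |ξ₃ t s r - ξ₃' t s r| ≤ ε)
    {t s : ℝ} (ht : t ∈ Icc (T - d - τ) (T - d)) (hs : s ∈ Icc (-d) 0) :
    |phi2 b σ T d ξ₂ ξ₃ t s - phi2 b σ T d ξ₂' ξ₃' t s| ≤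
      6 * (1 + |b|) ^ 2 * ((σ ^ 2)⁻¹ * ε * τ) := by
  set u := min (T - d) (t + s + d)
  have h0 : (0 : ℝ) ∈ Icc (-d) 0 := ⟨neg_nonpos.2 hd, le_rfl⟩
  have htu : t ≤ u := le_min ht.2 (by linarith [hs.1])
  have hu : u ∈ Icc (T - d - τ) (T - d) := ⟨ht.1.trans htu, min_le_left _ _⟩
  have hwin : ∀ x ∈ Icc t u,
      x ∈ Icc (T - d - τ) (T - d) ∧ t + s - x ∈ Icc (-d) 0 ∧ (0 : ℝ) ∈ Icc (-d) 0 :=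
    fun x hx => ⟨⟨ht.1.trans hx.1, hx.2.trans hu.2⟩,
      ⟨by linarith [hx.2, min_le_right (T - d) (t + s + d)], by linarith [hx.1, hs.2]⟩, h0⟩
  have hβ : 3 / 2 * (1 + |b|) ≤ 3 / 2 * (1 + |b|) ^ 2 := by nlinarith [abs_nonneg b]
  have hint : |(∫ x in t..u, ξ₂ x 0 * ξ₃ x (t + s - x) 0) -
      ∫ x in t..u, ξ₂' x 0 * ξ₃' x (t + s - x) 0| ≤ 3 * (1 + |b|) ^ 2 * ε * τ :=
    abs_intervalIntegral_sub_le_mul htu (by linarith [ht.1, hu.2])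
      (((hB.continuousOn_two_zero hd).mono fun x hx => (hwin x hx).1).mul
        (hB.continuousOn_three_comp (fun x => t + s - x) (fun _ => 0) (by fun_prop)
          (by fun_prop) hwin))
      (((hB'.continuousOn_two_zero hd).mono fun x hx => (hwin x hx).1).mul
        (hB'.continuousOn_three_comp (fun x => t + s - x) (fun _ => 0) (by fun_prop)
          (by fun_prop) hwin))
      fun x hx => by
        obtain ⟨hx, hxs, -⟩ := hwin x hx
        exact (abs_mul_sub_mul_le ((hB'.abs_two_le hx h0).trans hβ)
          (hB.abs_three_le hx hxs h0) (hε₂ x hx 0 h0) (hε₃ x hx _ hxs 0 h0)).trans_eq (by ring)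
  have h1 := abs_phi1_sub_le (σ := σ) hd hB hB' hε₂ hu
  have hK : 0 ≤ (σ ^ 2)⁻¹ := by positivity
  have hL : 0 ≤ (σ ^ 2)⁻¹ * ε * τ := by
    have := (abs_nonneg _).trans (hε₂ t ht 0 h0)
    have : 0 ≤ τ := by linarith [ht.1, ht.2]
    positivity
  unfold phi2
  refine (abs_mul_sub_mul_sub_le _ _ _ _ _ _ hK).trans ?_
  calc _ ≤ |b| * (3 * (1 + |b|) * ((σ ^ 2)⁻¹ * ε * τ)) +
        (σ ^ 2)⁻¹ * (3 * (1 + |b|) ^ 2 * ε * τ) := by gcongr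
    _ ≤ 6 * (1 + |b|) ^ 2 * ((σ ^ 2)⁻¹ * ε * τ) := by
        nlinarith [mul_nonneg (abs_nonneg b) hL]

lemma abs_phi3_sub_le (hd : 0 ≤ d) (hB : memBall b T d τ ξ₁ ξ₂ ξ₃)
    (hB' : memBall b T d τ ξ₁' ξ₂' ξ₃')
    (hε₂ : ∀ t ∈ Icc (T - d - τ) (T - d), ∀ s ∈ Icc (-d) 0, |ξ₂ t s - ξ₂' t s| ≤ ε)
    (hε₃ : ∀ t ∈ Icc (T - d - τ) (T - d), ∀ s ∈ Icc (-d) 0, ∀ r ∈ Icc (-d) 0,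
      |ξ₃ t s r - ξ₃' t s r| ≤ ε)
    {t s r : ℝ} (ht : t ∈ Icc (T - d - τ) (T - d)) (hs : s ∈ Icc (-d) 0)
    (hr : r ∈ Icc (-d) 0) :
    |phi3 b σ T d ξ₂ ξ₃ t s r - phi3 b σ T d ξ₂' ξ₃' t s r| ≤
      9 * (1 + |b|) ^ 3 * ((σ ^ 2)⁻¹ * ε * τ) := by
  set u := min (T - d) (t + min s r + d)
  have h0 : (0 : ℝ) ∈ Icc (-d) 0 := ⟨neg_nonpos.2 hd, le_rfl⟩
  have htu : t ≤ u := le_min ht.2 (by linarith [le_min hs.1 hr.1])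
  have hu : u ∈ Icc (T - d - τ) (T - d) := ⟨ht.1.trans htu, min_le_left _ _⟩
  have hsr : |s - r| - d ∈ Icc (-d) 0 := by
    have := abs_sub_le_iff.2 (⟨by linarith [hs.2, hr.1], by linarith [hs.1, hr.2]⟩ :
      s - r ≤ d ∧ r - s ≤ d)
    exact ⟨by linarith [abs_nonneg (s - r)], by linarith⟩
  have hwin : ∀ x ∈ Icc t u, x ∈ Icc (T - d - τ) (T - d) ∧
      t + s - x ∈ Icc (-d) 0 ∧ t + r - x ∈ Icc (-d) 0 := fun x hx =>
    have hxu := hx.2.trans (min_le_right (T - d) (t + min s r + d))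
    ⟨⟨ht.1.trans hx.1, hx.2.trans hu.2⟩,
      ⟨by linarith [min_le_left s r], by linarith [hx.1, hs.2]⟩,
      ⟨by linarith [min_le_right s r], by linarith [hx.1, hr.2]⟩⟩
  have hint : |(∫ x in t..u, ξ₃ x (t + s - x) 0 * ξ₃ x 0 (t + r - x)) -
      ∫ x in t..u, ξ₃' x (t + s - x) 0 * ξ₃' x 0 (t + r - x)| ≤
      3 * (1 + |b|) ^ 2 * ε * τ :=
    abs_intervalIntegral_sub_le_mul htu (by linarith [ht.1, hu.2])
      ((hB.continuousOn_three_comp (fun x => t + s - x) (fun _ => 0) (by fun_prop)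
          (by fun_prop) fun x hx => ⟨(hwin x hx).1, (hwin x hx).2.1, h0⟩).mul
        (hB.continuousOn_three_comp (fun _ => 0) (fun x => t + r - x) (by fun_prop)
          (by fun_prop) fun x hx => ⟨(hwin x hx).1, h0, (hwin x hx).2.2⟩))
      ((hB'.continuousOn_three_comp (fun x => t + s - x) (fun _ => 0) (by fun_prop)
          (by fun_prop) fun x hx => ⟨(hwin x hx).1, (hwin x hx).2.1, h0⟩).mul
        (hB'.continuousOn_three_comp (fun _ => 0) (fun x => t + r - x) (by fun_prop)
          (by fun_prop) fun x hx => ⟨(hwin x hx).1, h0, (hwin x hx).2.2⟩))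
      fun x hx => by
        obtain ⟨hx, hxs, hxr⟩ := hwin x hx
        exact (abs_mul_sub_mul_le (hB'.abs_three_le hx hxs h0) (hB.abs_three_le hx h0 hxr)
          (hε₃ x hx _ hxs 0 h0) (hε₃ x hx 0 h0 _ hxr)).trans_eq (by ring)
  have h2 := abs_phi2_sub_le (σ := σ) hd hB hB' hε₂ hε₃ hu hsr
  have hK : 0 ≤ (σ ^ 2)⁻¹ := by positivity
  have hL : 0 ≤ (σ ^ 2)⁻¹ * ε * τ := by
    have := (abs_nonneg _).trans (hε₂ t ht 0 h0)
    have : 0 ≤ τ := by linarith [ht.1, ht.2]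
    positivity
  unfold phi3
  refine (abs_mul_sub_mul_sub_le _ _ _ _ _ _ hK).trans ?_
  calc _ ≤ |b| * (6 * (1 + |b|) ^ 2 * ((σ ^ 2)⁻¹ * ε * τ)) +
        (σ ^ 2)⁻¹ * (3 * (1 + |b|) ^ 2 * ε * τ) := by gcongr
    _ ≤ 9 * (1 + |b|) ^ 3 * ((σ ^ 2)⁻¹ * ε * τ) := by
        have hβ := mul_nonneg (sq_nonneg (1 + |b|)) hL
        nlinarith [mul_nonneg (abs_nonneg b) hβ]

end Lipschitz

/-- There is a constant `m > 0` depending only on `b` and `σ` so that for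
every `τ ∈ (0,d]` the operator `φ` is `τ m`-Lipschitz on the ball `B_τ` for the norm given
by the sum of the sup norms of the three components. -/
theorem stmt_3 (b σ : ℝ) (hσ : σ ≠ 0) :
    ∃ m : ℝ, 0 < m ∧
      ∀ d T τ : ℝ, 0 < d → 2 * d ≤ T → 0 < τ → τ ≤ d →
        ∀ (ξ₁ : ℝ → ℝ) (ξ₂ : ℝ → ℝ → ℝ) (ξ₃ : ℝ → ℝ → ℝ → ℝ)
          (ξ₁' : ℝ → ℝ) (ξ₂' : ℝ → ℝ → ℝ) (ξ₃' : ℝ → ℝ → ℝ → ℝ),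
          memBall b T d τ ξ₁ ξ₂ ξ₃ → memBall b T d τ ξ₁' ξ₂' ξ₃' →
            supNorm1 T d τ (fun t => phi1 σ T d ξ₂ t - phi1 σ T d ξ₂' t) +
              supNorm2 T d τ (fun t s => phi2 b σ T d ξ₂ ξ₃ t s - phi2 b σ T d ξ₂' ξ₃' t s) +
              supNorm3 T d τ
                (fun t s r => phi3 b σ T d ξ₂ ξ₃ t s r - phi3 b σ T d ξ₂' ξ₃' t s r) ≤
            τ * m * (supNorm1 T d τ (fun t => ξ₁ t - ξ₁' t) +
              supNorm2 T d τ (fun t s => ξ₂ t s - ξ₂' t s) +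
              supNorm3 T d τ (fun t s r => ξ₃ t s r - ξ₃' t s r)) := by
  refine ⟨18 * (1 + |b|) ^ 3 * (σ ^ 2)⁻¹, by positivity, ?_⟩
  intro d T τ hd _ hτ _ ξ₁ ξ₂ ξ₃ ξ₁' ξ₂' ξ₃' hB hB'
  set N₁ := supNorm1 T d τ (fun t => ξ₁ t - ξ₁' t)
  set N₂ := supNorm2 T d τ (fun t s => ξ₂ t s - ξ₂' t s)
  set N₃ := supNorm3 T d τ (fun t s r => ξ₃ t s r - ξ₃' t s r)
  have hN₁ : 0 ≤ N₁ := sSup_abs_image_nonneg _ _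
  have hN₂ : 0 ≤ N₂ := sSup_abs_image_nonneg _ _
  have hN₃ : 0 ≤ N₃ := sSup_abs_image_nonneg _ _
  have hε₂ : ∀ t ∈ Icc (T - d - τ) (T - d), ∀ s ∈ Icc (-d) 0,
      |ξ₂ t s - ξ₂' t s| ≤ N₂ + N₃ := fun t ht s hs =>
    (le_sSup_abs_image (isCompact_Icc.prod isCompact_Icc) (hB.2.1.sub hB'.2.1)
      (mk_mem_prod ht hs)).trans (le_add_of_nonneg_right hN₃)
  have hε₃ : ∀ t ∈ Icc (T - d - τ) (T - d), ∀ s ∈ Icc (-d) 0, ∀ r ∈ Icc (-d) 0,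
      |ξ₃ t s r - ξ₃' t s r| ≤ N₂ + N₃ := fun t ht s hs r hr =>
    (le_sSup_abs_image (isCompact_Icc.prod (isCompact_Icc.prod isCompact_Icc))
      (hB.2.2.1.sub hB'.2.2.1) (mk_mem_prod ht (mk_mem_prod hs hr))).trans
      (le_add_of_nonneg_left hN₂)
  have hI : (Icc (T - d - τ) (T - d)).Nonempty := nonempty_Icc.2 (by linarith)
  have hJ : (Icc (-d) 0).Nonempty := nonempty_Icc.2 (by linarith)
  have h1 := sSup_abs_image_le hI fun t ht => abs_phi1_sub_le (σ := σ) hd.le hB hB' hε₂ ht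
  have h2 := sSup_abs_image_le (hI.prod hJ) fun p hp =>
    abs_phi2_sub_le (σ := σ) hd.le hB hB' hε₂ hε₃ hp.1 hp.2
  have h3 := sSup_abs_image_le (hI.prod (hJ.prod hJ)) fun p hp =>
    abs_phi3_sub_le (σ := σ) hd.le hB hB' hε₂ hε₃ hp.1 hp.2.1 hp.2.2
  refine (add_le_add (add_le_add h1 h2) h3).trans ?_
  have hL : 0 ≤ (σ ^ 2)⁻¹ * (N₂ + N₃) * τ := by positivity
  have hβ : 3 * (1 + |b|) + 6 * (1 + |b|) ^ 2 + 9 * (1 + |b|) ^ 3 ≤ 18 * (1 + |b|) ^ 3 := by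
    nlinarith [abs_nonneg b]
  calc _ = (3 * (1 + |b|) + 6 * (1 + |b|) ^ 2 + 9 * (1 + |b|) ^ 3) *
        ((σ ^ 2)⁻¹ * (N₂ + N₃) * τ) := by ring
    _ ≤ 18 * (1 + |b|) ^ 3 * ((σ ^ 2)⁻¹ * (N₂ + N₃) * τ) := by gcongr
    _ ≤ τ * (18 * (1 + |b|) ^ 3 * (σ ^ 2)⁻¹) * (N₁ + N₂ + N₃) := by
        rw [show τ * (18 * (1 + |b|) ^ 3 * (σ ^ 2)⁻¹) * (N₁ + N₂ + N₃) =
          18 * (1 + |b|) ^ 3 * ((σ ^ 2)⁻¹ * (N₁ + N₂ + N₃) * τ) by ring]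
        gcongr
        linarith
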